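/- arXiv:2209.10213 — 3 statements merged into one kernel-verified Lean document; each statement's English description precedes it below -/
import Mathlib

section
/- Fix n ≥ 4, a_n, b_n, c_n, d_n ∈ [0,1] and f : 𝕋 → ℝ. Let F : Ω_n → ℝ be F(η) = ⟨π(η), f⟩ = n^{−1} ∑_{x∈ℤ_n} η(x) f(x/n). Then for every η ∈ Ω_n: 𝓛ₙ F(η) = −(a_n+b_n) n^{−2} ∑_{x∈ℤ_n} η(x) ∇_n^− f(x/n) + c_n n^{−2} ∑_{x∈ℤ_n} η(x) ∇_n^+ f(x/n) − a_n n^{−2} (η(1)−η(n)) ∇_n^− f(0) + d_n n^{−2} (η(1)−η(2)) ∇_n^+ f(1/n). -/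
/-!
`η^{1→n}` and `η^{n→1}` are cyclic shifts, so a change of variables turns the change of
`⟨π(η), f⟩` under them into a pairing of `η` with a discrete gradient of `f`. The moves
`η^{1→n−1}` and `η^{1↔2}` differ from `η^{1→n}` and from `η` only at the two sites
`{n, n−1}` and `{1, 2}` respectively, which produces the two boundary terms.
-/


noncomputable section

open Finset

/-- `η^{1→n−1}`: remove the top card and insert it at position `n−1`.
Positions are labelled by `ZMod n`, with position `n` corresponding to `0`
and position `n−1` to `-1`. -/
def mapA {n : ℕ} (η : ZMod n → Fin 2) : ZMod n → Fin 2 :=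
  fun x => if x = 0 then η 0 else if x = -1 then η 1 else η (x + 1)

/-- `η^{1→n}`: remove the top card and insert it at the bottom,
i.e. `η^{1→n}(x) = η(x+1)` cyclically. -/
def mapB {n : ℕ} (η : ZMod n → Fin 2) : ZMod n → Fin 2 :=
  fun x => η (x + 1)

/-- `η^{n→1}`: remove the bottom card and insert it at the top,
i.e. `η^{n→1}(x) = η(x−1)` cyclically. -/
def mapC {n : ℕ} (η : ZMod n → Fin 2) : ZMod n → Fin 2 :=
  fun x => η (x - 1)

/-- `η^{1↔2}`: transpose the coordinates at positions `1` and `2`. -/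
def mapD {n : ℕ} (η : ZMod n → Fin 2) : ZMod n → Fin 2 :=
  fun x => if x = 1 then η 2 else if x = 2 then η 1 else η x

/-- The particle-system generator `𝓛ₙ`. -/
def gen {n : ℕ} (a b c d : ℝ) (f : (ZMod n → Fin 2) → ℝ) (η : ZMod n → Fin 2) : ℝ :=
  a * (f (mapA η) - f η) + b * (f (mapB η) - f η)
    + c * (f (mapC η) - f η) + d * (f (mapD η) - f η)

/-- The Bernoulli product measure `ν_ρ` on `Ω_n = {0,1}^{ℤ_n}`. -/
def nuMeasure {n : ℕ} [NeZero n] (ρ : ℝ) (η : ZMod n → Fin 2) : ℝ :=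
  ∏ x : ZMod n, (ρ * ((η x : ℕ) : ℝ) + (1 - ρ) * (1 - ((η x : ℕ) : ℝ)))

/-- `∫ F dν_ρ = ∑_η ν_ρ(η) F(η)`. -/
def integral {n : ℕ} [NeZero n] (ρ : ℝ) (F : (ZMod n → Fin 2) → ℝ) : ℝ :=
  ∑ η : ZMod n → Fin 2, nuMeasure ρ η * F η


/-!
STATEMENT 7.  A function `f : 𝕋 → ℝ` on the torus `𝕋 = ℝ/ℤ` is modelled as a
1-periodic `f : ℝ → ℝ`, evaluated at `x/n` for `x ∈ ZMod n` via the canonical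
representative `x.val ∈ {0,…,n−1}` (so `f(n/n) = f(0)`).
-/

/-- The discrete gradient `∇_n^− f(x/n) = n (f(x/n) − f((x−1)/n))`. -/
def gradMinus (n : ℕ) (f : ℝ → ℝ) (x : ZMod n) : ℝ :=
  n * (f ((x.val : ℝ) / n) - f (((x - 1).val : ℝ) / n))

/-- The discrete gradient `∇_n^+ f(x/n) = n (f((x+1)/n) − f(x/n))`. -/
def gradPlus (n : ℕ) (f : ℝ → ℝ) (x : ZMod n) : ℝ :=
  n * (f (((x + 1).val : ℝ) / n) - f ((x.val : ℝ) / n))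

/-- The empirical pairing `⟨π(η), f⟩ = n⁻¹ ∑_{x∈ℤ_n} η(x) f(x/n)`. -/
def pairing {n : ℕ} [NeZero n] (η : ZMod n → Fin 2) (f : ℝ → ℝ) : ℝ :=
  (1 / (n : ℝ)) * ∑ x : ZMod n, ((η x : ℕ) : ℝ) * f ((x.val : ℝ) / n)

namespace ZMod

variable {n : ℕ}

theorem zero_ne_neg_one [Fact (1 < n)] : (0 : ZMod n) ≠ -1 := by
  simp [eq_comm]

theorem one_ne_two [Fact (1 < n)] : (1 : ZMod n) ≠ 2 := fun h =>
  one_ne_zero (by linear_combination -h : (1 : ZMod n) = 0)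

end ZMod

section Moves

variable {n : ℕ} [NeZero n] (η : ZMod n → Fin 2) (g : ZMod n → ℝ)

theorem sum_mapB_mul :
    ∑ x, ((mapB η x : ℕ) : ℝ) * g x = ∑ x, ((η x : ℕ) : ℝ) * g (x - 1) :=
  Fintype.sum_equiv (Equiv.addRight 1) _ _ fun x => by simp [mapB]

theorem sum_mapC_mul :
    ∑ x, ((mapC η x : ℕ) : ℝ) * g x = ∑ x, ((η x : ℕ) : ℝ) * g (x + 1) :=
  Fintype.sum_equiv (Equiv.subRight 1) _ _ fun x => by simp [mapC]

theorem sum_mapA_mul [Fact (1 < n)] :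
    ∑ x, ((mapA η x : ℕ) : ℝ) * g x
      = ∑ x, ((mapB η x : ℕ) : ℝ) * g x
        + (((η 0 : ℕ) : ℝ) - ((η 1 : ℕ) : ℝ)) * (g 0 - g (-1)) := by
  rw [← sub_eq_iff_eq_add', ← sum_sub_distrib,
    Fintype.sum_eq_add 0 (-1) ZMod.zero_ne_neg_one fun x hx => by simp [mapA, mapB, hx.1, hx.2]]
  simp only [mapA, mapB, ↓reduceIte, ZMod.zero_ne_neg_one.symm, zero_add, neg_add_cancel]
  ring

theorem sum_mapD_mul [Fact (1 < n)] :
    ∑ x, ((mapD η x : ℕ) : ℝ) * g x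
      = ∑ x, ((η x : ℕ) : ℝ) * g x
        + (((η 1 : ℕ) : ℝ) - ((η 2 : ℕ) : ℝ)) * (g 2 - g 1) := by
  rw [← sub_eq_iff_eq_add', ← sum_sub_distrib,
    Fintype.sum_eq_add 1 2 ZMod.one_ne_two fun x hx => by simp [mapD, hx.1, hx.2]]
  simp only [mapD, ↓reduceIte, ZMod.one_ne_two.symm]
  ring

end Moves

section Pairing

variable {n : ℕ} [NeZero n] (η : ZMod n → Fin 2) (f : ℝ → ℝ)

theorem sum_mul_gradMinus :
    ∑ x, ((η x : ℕ) : ℝ) * gradMinus n f x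
      = n * (∑ x, ((η x : ℕ) : ℝ) * f ((x.val : ℝ) / n)
          - ∑ x, ((η x : ℕ) : ℝ) * f (((x - 1).val : ℝ) / n)) := by
  rw [mul_sub, mul_sum, mul_sum, ← sum_sub_distrib]
  exact sum_congr rfl fun x _ => by rw [gradMinus]; ring

theorem sum_mul_gradPlus :
    ∑ x, ((η x : ℕ) : ℝ) * gradPlus n f x
      = n * (∑ x, ((η x : ℕ) : ℝ) * f (((x + 1).val : ℝ) / n)
          - ∑ x, ((η x : ℕ) : ℝ) * f ((x.val : ℝ) / n)) := by
  rw [mul_sub, mul_sum, mul_sum, ← sum_sub_distrib]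
  exact sum_congr rfl fun x _ => by rw [gradPlus]; ring

theorem pairing_mapB_sub :
    pairing (mapB η) f - pairing η f
      = -(1 / (n : ℝ) ^ 2) * ∑ x, ((η x : ℕ) : ℝ) * gradMinus n f x := by
  have hn : (n : ℝ) ≠ 0 := NeZero.ne _
  rw [pairing, pairing, sum_mapB_mul, sum_mul_gradMinus]
  field_simp
  ring

theorem pairing_mapC_sub :
    pairing (mapC η) f - pairing η f
      = (1 / (n : ℝ) ^ 2) * ∑ x, ((η x : ℕ) : ℝ) * gradPlus n f x := by
  have hn : (n : ℝ) ≠ 0 := NeZero.ne _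
  rw [pairing, pairing, sum_mapC_mul, sum_mul_gradPlus]
  field_simp

theorem pairing_mapA_sub [Fact (1 < n)] :
    pairing (mapA η) f - pairing η f
      = -(1 / (n : ℝ) ^ 2) * ∑ x, ((η x : ℕ) : ℝ) * gradMinus n f x
        - (1 / (n : ℝ) ^ 2) * (((η 1 : ℕ) : ℝ) - ((η 0 : ℕ) : ℝ)) * gradMinus n f 0 := by
  have hn : (n : ℝ) ≠ 0 := NeZero.ne _
  rw [← pairing_mapB_sub, pairing, pairing, pairing, sum_mapA_mul, gradMinus, zero_sub]
  field_simp
  ring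

theorem pairing_mapD_sub [Fact (1 < n)] :
    pairing (mapD η) f - pairing η f
      = (1 / (n : ℝ) ^ 2) * (((η 1 : ℕ) : ℝ) - ((η 2 : ℕ) : ℝ)) * gradPlus n f 1 := by
  have hn : (n : ℝ) ≠ 0 := NeZero.ne _
  rw [pairing, pairing, sum_mapD_mul, gradPlus, one_add_one_eq_two]
  field_simp
  ring

end Pairing

theorem gen_on_empirical_pairing_general {n : ℕ} [NeZero n] (hn : 4 ≤ n)
    (a b c d : ℝ)
    (f : ℝ → ℝ) (η : ZMod n → Fin 2) :
    gen a b c d (fun ξ => pairing ξ f) η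
      = - (a + b) * (1 / (n : ℝ) ^ 2) * (∑ x : ZMod n, ((η x : ℕ) : ℝ) * gradMinus n f x)
        + c * (1 / (n : ℝ) ^ 2) * (∑ x : ZMod n, ((η x : ℕ) : ℝ) * gradPlus n f x)
        - a * (1 / (n : ℝ) ^ 2) * (((η 1 : ℕ) : ℝ) - ((η 0 : ℕ) : ℝ)) * gradMinus n f 0
        + d * (1 / (n : ℝ) ^ 2) * (((η 1 : ℕ) : ℝ) - ((η 2 : ℕ) : ℝ)) * gradPlus n f 1 := by
  have : Fact (1 < n) := ⟨by omega⟩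
  rw [gen, pairing_mapA_sub, pairing_mapB_sub, pairing_mapC_sub, pairing_mapD_sub]
  ring

theorem gen_on_empirical_pairing {n : ℕ} [NeZero n] (hn : 4 ≤ n)
    (a b c d : ℝ) (ha : a ∈ Set.Icc (0 : ℝ) 1) (hb : b ∈ Set.Icc (0 : ℝ) 1)
    (hc : c ∈ Set.Icc (0 : ℝ) 1) (hd : d ∈ Set.Icc (0 : ℝ) 1)
    (f : ℝ → ℝ) (hf : Function.Periodic f 1) (η : ZMod n → Fin 2) :
    gen a b c d (fun ξ => pairing ξ f) η
      = - (a + b) * (1 / (n : ℝ) ^ 2) * (∑ x : ZMod n, ((η x : ℕ) : ℝ) * gradMinus n f x)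
        + c * (1 / (n : ℝ) ^ 2) * (∑ x : ZMod n, ((η x : ℕ) : ℝ) * gradPlus n f x)
        - a * (1 / (n : ℝ) ^ 2) * (((η 1 : ℕ) : ℝ) - ((η 0 : ℕ) : ℝ)) * gradMinus n f 0
        + d * (1 / (n : ℝ) ^ 2) * (((η 1 : ℕ) : ℝ) - ((η 2 : ℕ) : ℝ)) * gradPlus n f 1 :=
  gen_on_empirical_pairing_general hn a b c d f η
end
end

section
/- Fix n ≥ 4 and ρ ∈ [0,1]. Let f : Ω_n → [0,∞) be a probability density with respect to ν_ρ, i.e. ∫ f dν_ρ = 1. Then for every B > 0: ∫ (η(1) − η(n)) f(η) dν_ρ(η) ≤ 2B + (1/(2B)) ∫ (√(f(η^{1→n})) − √(f(η)))² dν_ρ(η). -/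
noncomputable section

open Finset

/-!
Since `ν_ρ` is invariant under the cyclic shift `η ↦ η^{1→n}`, which moves the occupation of
site `1` to site `n`, the drift `∫ (η(1) − η(n)) f dν_ρ` equals `∫ η(1) (f(η) − f(η^{1→n})) dν_ρ`.
Writing `f − f∘η^{1→n} = (√f + √f^{1→n})(√f − √f^{1→n})`, Young's inequality bounds the integrand by
`B/2 (√f + √f^{1→n})² + 1/(2B) (√f^{1→n} − √f)²`, and `(√f + √f^{1→n})² ≤ 2 (f + f^{1→n})`
integrates to at most `4` by shift invariance again.
-/

lemma coe_fin_two_le_one (i : Fin 2) : ((i : ℕ) : ℝ) ≤ 1 := by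
  exact_mod_cast Fin.is_le i

lemma mul_sq_sub_sq_le_young {x a b B : ℝ} (hB : 0 < B) (hx0 : 0 ≤ x) (hx1 : x ≤ 1)
    (ha : 0 ≤ a) (hb : 0 ≤ b) :
    x * (a ^ 2 - b ^ 2) ≤ B / 2 * (a + b) ^ 2 + 1 / (2 * B) * (b - a) ^ 2 := by
  have young : |a ^ 2 - b ^ 2| ≤ B / 2 * (a + b) ^ 2 + 1 / (2 * B) * (b - a) ^ 2 := by
    rw [show a ^ 2 - b ^ 2 = (a + b) * (a - b) by ring, abs_mul, abs_of_nonneg (by positivity)]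
    have := two_mul_le_add_sq (B * (a + b)) |a - b|
    rw [sq_abs] at this
    field_simp
    nlinarith
  calc x * (a ^ 2 - b ^ 2) ≤ |x * (a ^ 2 - b ^ 2)| := le_abs_self _
    _ ≤ |a ^ 2 - b ^ 2| := by
      rw [abs_mul, abs_of_nonneg hx0]
      exact mul_le_of_le_one_left (abs_nonneg _) hx1
    _ ≤ _ := young

lemma mapB_bijective {n : ℕ} : Function.Bijective (mapB (n := n)) :=
  (Equiv.arrowCongr (Equiv.subRight (1 : ZMod n)) (Equiv.refl (Fin 2))).bijective

section Integral

variable {n : ℕ} [NeZero n] {ρ : ℝ}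

lemma nuMeasure_nonneg (hρ : ρ ∈ Set.Icc (0 : ℝ) 1) (η : ZMod n → Fin 2) :
    0 ≤ nuMeasure ρ η :=
  prod_nonneg fun x _ => by
    have h0 : (0 : ℝ) ≤ ((η x : ℕ) : ℝ) := Nat.cast_nonneg _
    have h1 := coe_fin_two_le_one (η x)
    nlinarith [hρ.1, hρ.2]

lemma nuMeasure_mapB (η : ZMod n → Fin 2) : nuMeasure ρ (mapB η) = nuMeasure ρ η :=
  Fintype.prod_equiv (Equiv.addRight 1) _ _ fun _ => rfl

lemma integral_comp_mapB (F : (ZMod n → Fin 2) → ℝ) :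
    integral ρ (fun η => F (mapB η)) = integral ρ F :=
  Fintype.sum_bijective mapB mapB_bijective _ _ fun η => by rw [nuMeasure_mapB]

lemma integral_add (F G : (ZMod n → Fin 2) → ℝ) :
    integral ρ (fun η => F η + G η) = integral ρ F + integral ρ G := by
  simp only [integral, mul_add, sum_add_distrib]

lemma integral_sub (F G : (ZMod n → Fin 2) → ℝ) :
    integral ρ (fun η => F η - G η) = integral ρ F - integral ρ G := by
  simp only [integral, mul_sub, sum_sub_distrib]

lemma integral_const_mul (c : ℝ) (F : (ZMod n → Fin 2) → ℝ) :
    integral ρ (fun η => c * F η) = c * integral ρ F := by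
  simp only [integral, mul_sum, mul_left_comm]

lemma integral_mono (hρ : ρ ∈ Set.Icc (0 : ℝ) 1) {F G : (ZMod n → Fin 2) → ℝ}
    (h : ∀ η, F η ≤ G η) : integral ρ F ≤ integral ρ G :=
  sum_le_sum fun η _ => mul_le_mul_of_nonneg_left (h η) (nuMeasure_nonneg hρ η)

lemma integral_sub_mul_eq_integral_mul_sub_comp_mapB (f : (ZMod n → Fin 2) → ℝ) :
    integral ρ (fun η => (((η 1 : ℕ) : ℝ) - ((η 0 : ℕ) : ℝ)) * f η)
      = integral ρ (fun η => ((η 1 : ℕ) : ℝ) * (f η - f (mapB η))) := by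
  have shift := integral_comp_mapB (ρ := ρ) fun η => ((η 0 : ℕ) : ℝ) * f η
  simp only [sub_mul, mul_sub, integral_sub]
  rw [← shift]
  simp only [mapB, zero_add]

lemma integral_sq_sqrt_add_sqrt_comp_mapB_le_four (hρ : ρ ∈ Set.Icc (0 : ℝ) 1)
    {f : (ZMod n → Fin 2) → ℝ} (hf0 : ∀ η, 0 ≤ f η) (hf1 : integral ρ f = 1) :
    integral ρ (fun η => (Real.sqrt (f η) + Real.sqrt (f (mapB η))) ^ 2) ≤ 4 :=
  calc integral ρ (fun η => (Real.sqrt (f η) + Real.sqrt (f (mapB η))) ^ 2)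
      ≤ integral ρ (fun η => 2 * (f η + f (mapB η))) := integral_mono hρ fun η => by
        simpa only [Real.sq_sqrt (hf0 _)] using
          add_sq_le (a := Real.sqrt (f η)) (b := Real.sqrt (f (mapB η)))
    _ = 4 := by
      rw [integral_const_mul, integral_add, integral_comp_mapB (F := f), hf1]
      norm_num

end Integral

theorem young_bound_top_bottom_general {n : ℕ} [NeZero n]
    (ρ : ℝ) (hρ : ρ ∈ Set.Icc (0 : ℝ) 1)
    (f : (ZMod n → Fin 2) → ℝ) (hf0 : ∀ η, 0 ≤ f η)
    (hf1 : integral ρ f = 1) (B : ℝ) (hB : 0 < B) :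
    integral ρ (fun η => (((η 1 : ℕ) : ℝ) - ((η 0 : ℕ) : ℝ)) * f η)
      ≤ 2 * B + (1 / (2 * B))
          * integral ρ (fun η => (Real.sqrt (f (mapB η)) - Real.sqrt (f η)) ^ 2) := by
  set S := integral ρ (fun η => (Real.sqrt (f η) + Real.sqrt (f (mapB η))) ^ 2)
  set D := integral ρ (fun η => (Real.sqrt (f (mapB η)) - Real.sqrt (f η)) ^ 2)
  have hS : S ≤ 4 := integral_sq_sqrt_add_sqrt_comp_mapB_le_four hρ hf0 hf1
  calc _ = integral ρ (fun η => ((η 1 : ℕ) : ℝ) * (f η - f (mapB η))) :=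
        integral_sub_mul_eq_integral_mul_sub_comp_mapB f
    _ ≤ integral ρ (fun η => B / 2 * (Real.sqrt (f η) + Real.sqrt (f (mapB η))) ^ 2
          + 1 / (2 * B) * (Real.sqrt (f (mapB η)) - Real.sqrt (f η)) ^ 2) :=
        integral_mono hρ fun η => by
          simpa only [Real.sq_sqrt (hf0 _)] using
            mul_sq_sub_sq_le_young hB (Nat.cast_nonneg _) (coe_fin_two_le_one (η 1))
              (Real.sqrt_nonneg (f η)) (Real.sqrt_nonneg (f (mapB η)))
    _ = B / 2 * S + 1 / (2 * B) * D := by rw [integral_add, integral_const_mul, integral_const_mul]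
    _ ≤ B / 2 * 4 + 1 / (2 * B) * D := by gcongr
    _ = 2 * B + 1 / (2 * B) * D := by ring

theorem young_bound_top_bottom {n : ℕ} [NeZero n] (hn : 4 ≤ n)
    (ρ : ℝ) (hρ : ρ ∈ Set.Icc (0 : ℝ) 1)
    (f : (ZMod n → Fin 2) → ℝ) (hf0 : ∀ η, 0 ≤ f η)
    (hf1 : integral ρ f = 1) (B : ℝ) (hB : 0 < B) :
    integral ρ (fun η => (((η 1 : ℕ) : ℝ) - ((η 0 : ℕ) : ℝ)) * f η)
      ≤ 2 * B + (1 / (2 * B))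
          * integral ρ (fun η => (Real.sqrt (f (mapB η)) - Real.sqrt (f η)) ^ 2) :=
  young_bound_top_bottom_general ρ hρ f hf0 hf1 B hB
end
end

section
/- Fix n ≥ 4, ρ ∈ [0,1] and b_n > 0. Then for every function f : Ω_n → ℝ: √n ∫ (η(1) − η(n)) f(η) dν_ρ(η) − n² (b_n/2) ∫ (f(η^{1→n}) − f(η))² dν_ρ(η) ≤ ρ/(2 b_n n). In particular, sup_f { √n ∫ (η(1) − η(n)) f dν_ρ − n² (b_n/2) ∫ (f∘(·)^{1→n} − f)² dν_ρ } ≤ ρ/(2 b_n n), the supremum being over all f : Ω_n → ℝ. -/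
noncomputable section

open Finset

/-!
Moving the top particle to the bottom leaves `ν_ρ` invariant and sends `η(1)` to `η(n)`, so
`∫ (η(1) − η(n)) f dν_ρ = ∫ η(1) (f(η) − f(η^{1→n})) dν_ρ`. Pointwise, Young's inequality
`x y − (a/2) y² ≤ x²/(2a)` with `x = √n η(1)`, `a = n² b_n` bounds the integrand by
`η(1)/(2 b_n n)`, whose integral is `ρ/(2 b_n n)`.
-/

lemma mul_sub_half_mul_sq_le {a : ℝ} (ha : 0 < a) (x y : ℝ) :
    x * y - a / 2 * y ^ 2 ≤ x ^ 2 / (2 * a) := by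
  rw [le_div_iff₀ (by positivity)]
  nlinarith [sq_nonneg (x - a * y)]

lemma natCast_fin_two_sq (v : Fin 2) : ((v : ℕ) : ℝ) ^ 2 = (v : ℕ) := by
  fin_cases v <;> simp

namespace ParticleSystem

variable {n : ℕ} [NeZero n] {ρ : ℝ}

def siteWeight (ρ : ℝ) (v : Fin 2) : ℝ :=
  ρ * ((v : ℕ) : ℝ) + (1 - ρ) * (1 - ((v : ℕ) : ℝ))

lemma nuMeasure_eq_prod_siteWeight (ρ : ℝ) (η : ZMod n → Fin 2) :
    nuMeasure ρ η = ∏ x, siteWeight ρ (η x) := rfl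

lemma siteWeight_nonneg (hρ : ρ ∈ Set.Icc (0 : ℝ) 1) (v : Fin 2) : 0 ≤ siteWeight ρ v := by
  obtain ⟨h0, h1⟩ := hρ
  fin_cases v <;> simp [siteWeight] <;> linarith

lemma nuMeasure_nonneg (hρ : ρ ∈ Set.Icc (0 : ℝ) 1) (η : ZMod n → Fin 2) :
    0 ≤ nuMeasure ρ η :=
  prod_nonneg fun x _ => siteWeight_nonneg hρ (η x)

lemma nuMeasure_comp_perm (ρ : ℝ) (e : Equiv.Perm (ZMod n)) (η : ZMod n → Fin 2) :
    nuMeasure ρ (η ∘ e) = nuMeasure ρ η :=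
  Equiv.prod_comp e fun x => siteWeight ρ (η x)

lemma integral_sub (ρ : ℝ) (F G : (ZMod n → Fin 2) → ℝ) :
    integral ρ (fun η => F η - G η) = integral ρ F - integral ρ G := by
  simp only [integral, mul_sub, sum_sub_distrib]

lemma integral_const_mul (ρ c : ℝ) (F : (ZMod n → Fin 2) → ℝ) :
    integral ρ (fun η => c * F η) = c * integral ρ F := by
  simp only [integral, mul_sum, mul_left_comm c]

lemma integral_mono (hρ : ρ ∈ Set.Icc (0 : ℝ) 1) {F G : (ZMod n → Fin 2) → ℝ}
    (h : ∀ η, F η ≤ G η) : integral ρ F ≤ integral ρ G :=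
  sum_le_sum fun η _ => mul_le_mul_of_nonneg_left (h η) (nuMeasure_nonneg hρ η)

lemma integral_comp_perm (ρ : ℝ) (e : Equiv.Perm (ZMod n)) (F : (ZMod n → Fin 2) → ℝ) :
    integral ρ (fun η => F (η ∘ e)) = integral ρ F :=
  Fintype.sum_equiv (e.symm.arrowCongr (Equiv.refl _)) _ _ fun η => by
    change _ = nuMeasure ρ (η ∘ e) * F (η ∘ e)
    rw [nuMeasure_comp_perm]

lemma integral_comp_mapB (ρ : ℝ) (F : (ZMod n → Fin 2) → ℝ) :
    integral ρ (fun η => F (mapB η)) = integral ρ F :=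
  integral_comp_perm ρ (Equiv.addRight 1) F

lemma integral_prod (ρ : ℝ) (g : ZMod n → Fin 2 → ℝ) :
    integral ρ (fun η => ∏ x, g x (η x)) = ∏ x, ∑ v, siteWeight ρ v * g x v := by
  rw [Fintype.prod_sum]
  simp only [integral, nuMeasure_eq_prod_siteWeight, prod_mul_distrib]

lemma integral_coord (ρ : ℝ) (k : ZMod n) :
    integral ρ (fun η => ((η k : ℕ) : ℝ)) = ρ := by
  have hsite : ∀ x : ZMod n,
      ∑ v, siteWeight ρ v * (if x = k then ((v : ℕ) : ℝ) else 1) = if x = k then ρ else 1 := by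
    intro x
    split_ifs <;> simp [siteWeight, Fin.sum_univ_two]
  calc integral ρ (fun η => ((η k : ℕ) : ℝ))
      = integral ρ (fun η => ∏ x, if x = k then ((η x : ℕ) : ℝ) else 1) := by
        simp only [prod_ite_eq' univ k, mem_univ, if_true]
    _ = ∏ x : ZMod n, if x = k then ρ else 1 := by
        rw [integral_prod ρ fun x v => if x = k then ((v : ℕ) : ℝ) else 1]
        exact prod_congr rfl fun x _ => hsite x
    _ = ρ := by simp

lemma integral_coord_sub_mul_eq (ρ : ℝ) (f : (ZMod n → Fin 2) → ℝ) :
    integral ρ (fun η => (((η 1 : ℕ) : ℝ) - ((η 0 : ℕ) : ℝ)) * f η)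
      = integral ρ (fun η => ((η 1 : ℕ) : ℝ) * (f η - f (mapB η))) := by
  have hshift : integral ρ (fun η => ((η 0 : ℕ) : ℝ) * f η)
      = integral ρ (fun η => ((η 1 : ℕ) : ℝ) * f (mapB η)) := by
    rw [← integral_comp_mapB ρ fun η => ((η 0 : ℕ) : ℝ) * f η]
    simp only [mapB, zero_add]
  simp only [sub_mul, mul_sub]
  rw [integral_sub, integral_sub, hshift]

lemma sqrt_mul_coord_mul_sub_le {b : ℝ} (hb : 0 < b) (f : (ZMod n → Fin 2) → ℝ)
    (η : ZMod n → Fin 2) :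
    Real.sqrt n * (((η 1 : ℕ) : ℝ) * (f η - f (mapB η)))
        - (n : ℝ) ^ 2 * (b / 2) * (f (mapB η) - f η) ^ 2
      ≤ ((η 1 : ℕ) : ℝ) / (2 * b * n) := by
  have hn : (0 : ℝ) < n := Nat.cast_pos.mpr (NeZero.pos n)
  have := mul_sub_half_mul_sq_le (by positivity : 0 < (n : ℝ) ^ 2 * b)
    (Real.sqrt n * (η 1 : ℕ)) (f η - f (mapB η))
  rw [mul_pow, Real.sq_sqrt hn.le, natCast_fin_two_sq, sub_sq_comm] at this
  convert this using 1 <;> field_simp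

lemma variational_functional_le (hρ : ρ ∈ Set.Icc (0 : ℝ) 1) {b : ℝ} (hb : 0 < b)
    (f : (ZMod n → Fin 2) → ℝ) :
    Real.sqrt n * integral ρ (fun η => (((η 1 : ℕ) : ℝ) - ((η 0 : ℕ) : ℝ)) * f η)
        - (n : ℝ) ^ 2 * (b / 2) * integral ρ (fun η => (f (mapB η) - f η) ^ 2)
      ≤ ρ / (2 * b * n) := calc
  _ = integral ρ (fun η => Real.sqrt n * (((η 1 : ℕ) : ℝ) * (f η - f (mapB η)))
        - (n : ℝ) ^ 2 * (b / 2) * (f (mapB η) - f η) ^ 2) := by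
    rw [integral_coord_sub_mul_eq, integral_sub, integral_const_mul, integral_const_mul]
  _ ≤ integral ρ (fun η => ((η 1 : ℕ) : ℝ) / (2 * b * n)) :=
    integral_mono hρ (sqrt_mul_coord_mul_sub_le hb f)
  _ = ρ / (2 * b * n) := by simp only [div_eq_inv_mul, integral_const_mul, integral_coord]

end ParticleSystem

open ParticleSystem in
theorem variational_bound_top_bottom_general {n : ℕ} [NeZero n]
    (ρ : ℝ) (hρ : ρ ∈ Set.Icc (0 : ℝ) 1) (b : ℝ) (hb : 0 < b) :
    (∀ f : (ZMod n → Fin 2) → ℝ,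
      Real.sqrt n * integral ρ (fun η => (((η 1 : ℕ) : ℝ) - ((η 0 : ℕ) : ℝ)) * f η)
          - (n : ℝ) ^ 2 * (b / 2) * integral ρ (fun η => (f (mapB η) - f η) ^ 2)
        ≤ ρ / (2 * b * n))
    ∧ (⨆ f : (ZMod n → Fin 2) → ℝ,
        (Real.sqrt n * integral ρ (fun η => (((η 1 : ℕ) : ℝ) - ((η 0 : ℕ) : ℝ)) * f η)
          - (n : ℝ) ^ 2 * (b / 2) * integral ρ (fun η => (f (mapB η) - f η) ^ 2)))
        ≤ ρ / (2 * b * n) :=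
  ⟨variational_functional_le hρ hb, ciSup_le (variational_functional_le hρ hb)⟩

theorem variational_bound_top_bottom {n : ℕ} [NeZero n] (hn : 4 ≤ n)
    (ρ : ℝ) (hρ : ρ ∈ Set.Icc (0 : ℝ) 1) (b : ℝ) (hb : 0 < b) :
    (∀ f : (ZMod n → Fin 2) → ℝ,
      Real.sqrt n * integral ρ (fun η => (((η 1 : ℕ) : ℝ) - ((η 0 : ℕ) : ℝ)) * f η)
          - (n : ℝ) ^ 2 * (b / 2) * integral ρ (fun η => (f (mapB η) - f η) ^ 2)
        ≤ ρ / (2 * b * n))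
    ∧ (⨆ f : (ZMod n → Fin 2) → ℝ,
        (Real.sqrt n * integral ρ (fun η => (((η 1 : ℕ) : ℝ) - ((η 0 : ℕ) : ℝ)) * f η)
          - (n : ℝ) ^ 2 * (b / 2) * integral ρ (fun η => (f (mapB η) - f η) ^ 2)))
        ≤ ρ / (2 * b * n) :=
  variational_bound_top_bottom_general ρ hρ b hb
end
end
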